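/- arXiv:2510.25855 — 3 statements merged into one kernel-verified Lean document; each statement's English description precedes it below -/
import Mathlib

section
/- If X and Y are square real matrices of the same size and [X,Y] = XY - YX = bY for some nonzero real b, then exp(X + Y) = exp(X) · exp(((1 - e^{-b})/b) Y). -/
open NormedSpace

attribute [local instance] Matrix.linftyOpSemiNormedRing Matrix.linftyOpNormedRing
  Matrix.linftyOpNormedAlgebra

section aux

variable {n : ℕ}

local notation "M" => Matrix (Fin n) (Fin n) ℝ

/-- exp of a scalar matrix. -/
lemma exp_smul_one (r : ℝ) : exp (r • (1 : M)) = Real.exp r • (1 : M) := by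
  have h := NormedSpace.algebraMap_exp_comm (𝕂 := ℝ) (𝔸 := M) r
  rw [← Real.exp_eq_exp_ℝ] at h
  have h2 := h.symm
  simp [Algebra.algebraMap_eq_smul_one] at h2
  exact h2

lemma conj_lemma (X Y : M) (b : ℝ) (hcomm : X * Y - Y * X = b • Y) (t : ℝ) :
    exp (t • X) * Y = Real.exp (t * b) • (Y * exp (t • X)) := by
  have hXY : X * Y = Y * (X + b • 1) := by
    have h : X * Y = Y * X + b • Y := by linear_combination (norm := noncomm_ring) hcomm
    rw [h, mul_add, mul_smul_comm, mul_one]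
  have hsemi : SemiconjBy Y (t • (X + b • 1)) (t • X) := by
    show Y * (t • (X + b • 1)) = (t • X) * Y
    rw [mul_smul_comm, smul_mul_assoc, ← hXY]
  have hpow : ∀ k : ℕ, (t • X) ^ k * Y = Y * (t • (X + b • 1)) ^ k := fun k =>
    (hsemi.pow_right k).symm
  have hmul : exp (t • X) * Y = Y * exp (t • (X + b • 1)) := by
    simp only [exp_eq_tsum ℝ]
    refine (((NormedSpace.expSeries_summable' (𝕂 := ℝ) (t • X)).tsum_mul_right Y).symm.trans ?_).trans
      ((NormedSpace.expSeries_summable' (𝕂 := ℝ) (t • (X + b • 1))).tsum_mul_left Y)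
    congr 1
    ext k
    rw [smul_mul_assoc, mul_smul_comm, hpow]
  have hsplit : exp (t • (X + b • 1)) = Real.exp (t * b) • exp (t • X) := by
    have hc : Commute ((t * b) • (1 : M)) (t • X) := by
      simp [Commute, SemiconjBy, mul_smul_comm, smul_mul_assoc, smul_smul, mul_comm]
    have h2 : t • (X + b • 1) = (t * b) • (1 : M) + t • X := by
      rw [smul_add, smul_smul]; exact add_comm _ _
    rw [h2, Matrix.exp_add_of_commute _ _ hc, exp_smul_one, smul_mul_assoc, one_mul]
  rw [hmul, hsplit, mul_smul_comm]

lemma main_aux (X Y : M) (b : ℝ) (hb : b ≠ 0)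
    (hcomm : X * Y - Y * X = b • Y) :
    exp (X + Y) = exp X * exp (((1 - Real.exp (-b)) / b) • Y) := by
  set c : ℝ → ℝ := fun t => (1 - Real.exp (-(t * b))) / b with hc_def
  set f : ℝ → M := fun t => exp (t • (X + Y)) with hf_def
  set g : ℝ → M := fun t => exp (t • X) * exp (c t • Y) with hg_def
  have hc' : ∀ t : ℝ, HasDerivAt c (Real.exp (-(t * b))) t := by
    intro t
    have h1 : HasDerivAt (fun t : ℝ => -(t * b)) (-b) t := by
      have := ((hasDerivAt_id t).mul_const b).neg
      simpa [Pi.neg_def] using this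
    have h2 : HasDerivAt (fun t : ℝ => Real.exp (-(t * b)))
        (Real.exp (-(t * b)) * (-b)) t := (Real.hasDerivAt_exp _).comp t h1
    have h3 : HasDerivAt c ((0 - Real.exp (-(t * b)) * (-b)) / b) t :=
      ((hasDerivAt_const t (1:ℝ)).sub h2).div_const b
    convert h3 using 1
    field_simp
    ring
  have hf' : ∀ t : ℝ, HasDerivAt f ((X + Y) * f t) t := fun t =>
    hasDerivAt_exp_smul_const' (X + Y) t
  have hg' : ∀ t : ℝ, HasDerivAt g ((X + Y) * g t) t := by
    intro t
    have h1 : HasDerivAt (fun t : ℝ => exp (t • X)) (X * exp (t • X)) t :=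
      hasDerivAt_exp_smul_const' X t
    have h2 : HasDerivAt (fun u : ℝ => exp (u • Y)) (Y * exp (c t • Y)) (c t) :=
      hasDerivAt_exp_smul_const' Y (c t)
    have h3 : HasDerivAt (fun t : ℝ => exp (c t • Y))
        (Real.exp (-(t * b)) • (Y * exp (c t • Y))) t := by
      have := HasDerivAt.scomp t h2 (hc' t)
      simp only [Function.comp_def] at this
      exact this
    have h4 := h1.mul h3
    convert h4 using 1
    · rfl
    · rfl
    · rfl
    rw [hg_def]
    rfl
    simp only [hg_def, add_mul, mul_smul_comm, ← mul_assoc]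
    congr 1
    rw [conj_lemma X Y b hcomm t, smul_mul_assoc, smul_smul, ← Real.exp_add]
    simp
  have key : f 1 = g 1 := by
    have hK : ∀ t : ℝ, LipschitzWith ‖(ContinuousLinearMap.mul ℝ M) (X + Y)‖₊
        (fun x : M => (X + Y) * x) := fun _ =>
      ((ContinuousLinearMap.mul ℝ M) (X + Y)).lipschitz
    have hfc : ContinuousOn f (Set.Icc 0 1) :=
      (fun t _ => ((hf' t).continuousAt).continuousWithinAt)
    have hgc : ContinuousOn g (Set.Icc 0 1) :=
      (fun t _ => ((hg' t).continuousAt).continuousWithinAt)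
    have h0 : f 0 = g 0 := by
      simp [hf_def, hg_def, hc_def]
    exact ODE_solution_unique hK hfc
      (fun t _ => (hf' t).hasDerivWithinAt) hgc
      (fun t _ => (hg' t).hasDerivWithinAt) h0 (Set.right_mem_Icc.2 zero_le_one)
  simp only [hf_def, hg_def, hc_def, one_smul, one_mul] at key
  exact key

end aux

theorem stmt_4 (n : ℕ) (X Y : Matrix (Fin n) (Fin n) ℝ) (b : ℝ) (hb : b ≠ 0)
    (hcomm : X * Y - Y * X = b • Y) :
    exp (X + Y) = exp X * exp (((1 - Real.exp (-b)) / b) • Y) :=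
  main_aux X Y b hb hcomm
end

section
/- For natural numbers n and j with 2j ≤ n, the falling factorial satisfies n^{underline{2j}} = 4^j · (⌊n/2⌋)^{underline{j}} · (⌈n/2⌉ - 1/2)^{underline{j}}, where the last falling factorial is computed in the rationals. -/
theorem stmt_6 (n j : ℕ) (h : 2 * j ≤ n) :
    (descPochhammer ℚ (2 * j)).eval (n : ℚ) =
      4 ^ j * (descPochhammer ℚ j).eval ((n / 2 : ℕ) : ℚ)
        * (descPochhammer ℚ j).eval ((((n + 1) / 2 : ℕ) : ℚ) - 1 / 2) := by
  induction j with
  | zero => simp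
  | succ j ih =>
    have h' : 2 * j ≤ n := by omega
    have key : ((n : ℚ) - (2 * j : ℕ)) * ((n : ℚ) - ((2 * j + 1 : ℕ) : ℚ)) =
        4 * ((((n / 2 : ℕ) : ℚ)) - j) * (((((n + 1) / 2 : ℕ) : ℚ) - 1 / 2) - j) := by
      rcases Nat.even_or_odd n with ⟨k, hk⟩ | ⟨k, hk⟩
      · subst hk
        have h1 : (k + k) / 2 = k := by omega
        have h2 : (k + k + 1) / 2 = k := by omega
        rw [h1, h2]; push_cast; ring
      · subst hk
        have h1 : (2 * k + 1) / 2 = k := by omega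
        have h2 : (2 * k + 1 + 1) / 2 = k + 1 := by omega
        rw [h1, h2]; push_cast; ring
    rw [show 2 * (j + 1) = 2 * j + 1 + 1 from by ring, descPochhammer_succ_eval,
      descPochhammer_succ_eval, descPochhammer_succ_eval, descPochhammer_succ_eval, ih h']
    push_cast at key ⊢
    linear_combination (4 ^ j * (descPochhammer ℚ j).eval ((n / 2 : ℕ) : ℚ)
      * (descPochhammer ℚ j).eval ((((n + 1) / 2 : ℕ) : ℚ) - 1 / 2)) * key
end

section
/- For a fixed time t > 0, the function g(t,x) = (2π(1 - e^{-t} - t e^{-t}))^{-1/2} · exp(-x²/(2(1 - e^{-t} - t e^{-t}))) satisfies the PDE ∂g/∂t = (1/2)[(1 - e^{-t}) ∂²g/∂x² + x ∂g/∂x + g] for all t > 0 and x ∈ ℝ. -/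
open Real

/-- `g(t,x)` : the Gaussian density with variance `1 - e^{-t} - t e^{-t}`. -/
noncomputable def g8 (t x : ℝ) : ℝ :=
  (2 * π * (1 - Real.exp (-t) - t * Real.exp (-t))) ^ (-(1 : ℝ) / 2) *
    Real.exp (-x ^ 2 / (2 * (1 - Real.exp (-t) - t * Real.exp (-t))))

lemma var_pos {t : ℝ} (ht : 0 < t) : 0 < 1 - Real.exp (-t) - t * Real.exp (-t) := by
  have h1 : t + 1 < Real.exp t := Real.add_one_lt_exp (ne_of_gt ht)
  have h2 : Real.exp t * Real.exp (-t) = 1 := by rw [← Real.exp_add]; simp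
  have h3 : 0 < Real.exp (-t) := Real.exp_pos _
  nlinarith [mul_lt_mul_of_pos_right h1 h3]

lemma g8_x_hasDeriv {t : ℝ} (ht : 0 < t) (y : ℝ) :
    HasDerivAt (fun z => g8 t z)
      (-(y / (1 - Real.exp (-t) - t * Real.exp (-t))) * g8 t y) y := by
  set c := 1 - Real.exp (-t) - t * Real.exp (-t) with hcdef
  have hc : 0 < c := var_pos ht
  have h1 : HasDerivAt (fun z : ℝ => -z ^ 2 / (2 * c)) (-(2 * y) / (2 * c)) y := by
    simpa using ((hasDerivAt_pow 2 y).neg.div_const (2 * c))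
  have h2 := h1.exp
  have h3 := h2.const_mul ((2 * π * c) ^ (-(1 : ℝ) / 2))
  refine HasDerivAt.congr_deriv h3 ?_
  simp only [g8, ← hcdef]
  field_simp

lemma g8_x_deriv {t : ℝ} (ht : 0 < t) :
    (fun y => deriv (fun z => g8 t z) y) =
      fun y => -(y / (1 - Real.exp (-t) - t * Real.exp (-t))) * g8 t y := by
  funext y
  exact (g8_x_hasDeriv ht y).deriv

lemma g8_xx_deriv {t : ℝ} (ht : 0 < t) (x : ℝ) :
    deriv (fun y => deriv (fun z => g8 t z) y) x =
      (-(1 / (1 - Real.exp (-t) - t * Real.exp (-t)))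
        + x ^ 2 / (1 - Real.exp (-t) - t * Real.exp (-t)) ^ 2) * g8 t x := by
  rw [g8_x_deriv ht]
  set c := 1 - Real.exp (-t) - t * Real.exp (-t) with hcdef
  have hc : 0 < c := var_pos ht
  have h1 : HasDerivAt (fun y : ℝ => -(y / c)) (-(1 / c)) x := by
    exact ((hasDerivAt_id x).div_const c).neg
  have h2 : HasDerivAt (fun y => -(y / c) * g8 t y) _ x := h1.mul (g8_x_hasDeriv ht x)
  rw [h2.deriv, ← hcdef]
  field_simp

lemma g8_t_hasDeriv (t x : ℝ) (ht : 0 < t) :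
    HasDerivAt (fun s => g8 s x)
      ((t * Real.exp (-t)) *
        (-(1 / (2 * (1 - Real.exp (-t) - t * Real.exp (-t))))
          + x ^ 2 / (2 * (1 - Real.exp (-t) - t * Real.exp (-t)) ^ 2)) * g8 t x) t := by
  set c := 1 - Real.exp (-t) - t * Real.exp (-t) with hcdef
  have hc : 0 < c := var_pos ht
  have hexp : HasDerivAt (fun s : ℝ => Real.exp (-s)) (-Real.exp (-t)) t := by
    simpa [Function.comp_def] using ((Real.hasDerivAt_exp (-t)).comp t ((hasDerivAt_id t).neg))
  have hσ : HasDerivAt (fun s : ℝ => 1 - Real.exp (-s) - s * Real.exp (-s))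
      (t * Real.exp (-t)) t := by
    have h1 : HasDerivAt (fun s : ℝ => s * Real.exp (-s))
        (1 * Real.exp (-t) + t * -Real.exp (-t)) t := (hasDerivAt_id t).mul hexp
    have h2 := (((hasDerivAt_const t (1 : ℝ)).sub hexp).sub h1)
    refine HasDerivAt.congr_deriv h2 ?_
    ring
  have hu : HasDerivAt (fun s : ℝ => 2 * π * (1 - Real.exp (-s) - s * Real.exp (-s)))
      (2 * π * (t * Real.exp (-t))) t := hσ.const_mul (2 * π)
  have h2πc : (0:ℝ) < 2 * π * c := by positivity
  have hrpow : HasDerivAt (fun v : ℝ => v ^ (-(1 : ℝ) / 2))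
      ((-(1 : ℝ) / 2) * (2 * π * c) ^ (-(1 : ℝ) / 2 - 1)) (2 * π * c) :=
    Real.hasDerivAt_rpow_const (Or.inl (ne_of_gt h2πc))
  have hf1 : HasDerivAt (fun s : ℝ =>
      (2 * π * (1 - Real.exp (-s) - s * Real.exp (-s))) ^ (-(1 : ℝ) / 2))
      ((-(1 : ℝ) / 2) * (2 * π * c) ^ (-(1 : ℝ) / 2 - 1) * (2 * π * (t * Real.exp (-t)))) t :=
    by have := hrpow.comp t hu; exact this
  have hden : HasDerivAt (fun s : ℝ => 2 * (1 - Real.exp (-s) - s * Real.exp (-s)))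
      (2 * (t * Real.exp (-t))) t := hσ.const_mul 2
  have hden_ne : 2 * c ≠ 0 := by positivity
  have hinner : HasDerivAt (fun s : ℝ =>
      -x ^ 2 / (2 * (1 - Real.exp (-s) - s * Real.exp (-s))))
      ((0 * (2 * c) - (-x ^ 2) * (2 * (t * Real.exp (-t)))) / (2 * c) ^ 2) t :=
    (hasDerivAt_const t (-x ^ 2)).div hden hden_ne
  have hf2 := hinner.exp
  have hprod := hf1.mul hf2
  refine HasDerivAt.congr_deriv hprod ?_
  have hsplit : (2 * π * c) ^ (-(1 : ℝ) / 2 - 1)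
      = (2 * π * c) ^ (-(1 : ℝ) / 2) / (2 * π * c) := by
    rw [Real.rpow_sub h2πc, Real.rpow_one]
  simp only [g8, ← hcdef, hsplit]
  have hπ : π ≠ 0 := Real.pi_ne_zero
  field_simp
  ring

theorem stmt_8 (t x : ℝ) (ht : 0 < t) :
    deriv (fun s => g8 s x) t =
      (1 / 2) * ((1 - Real.exp (-t)) * deriv (fun y => deriv (fun z => g8 t z) y) x
        + x * deriv (fun y => g8 t y) x + g8 t x) := by
  rw [(g8_t_hasDeriv t x ht).deriv, g8_xx_deriv ht x, (g8_x_hasDeriv ht x).deriv]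
  set c := 1 - Real.exp (-t) - t * Real.exp (-t) with hcdef
  have hc : 0 < c := var_pos ht
  have hrel : 1 - Real.exp (-t) = c + t * Real.exp (-t) := by rw [hcdef]; ring
  rw [hrel]
  field_simp
  ring
end
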